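/- arXiv:2311.14632 — 3 statements merged into one kernel-verified Lean document; each statement's English description precedes it below -/
import Mathlib

section
/- Let E be a real inner product space, C_1 > 0, s ≥ 0, B ≥ 1, and let ∇, g_1, …, g_B ∈ E satisfy ‖(1/B)·Σ_{i=1}^B g_i − ∇‖ ≤ s. Define e' := (1/B)·Σ_{i=1}^B (g_i − clip(g_i, C_1)). Then: (i) ‖e'‖ ≤ ‖∇‖ + s + C_1; (ii) if ‖e'‖ > C_2 for some C_2 > 0, then ‖∇‖ > C_2 − s − C_1; and (iii) if in addition C_2 ≥ 3·C_1 + s, then ‖∇‖ > 2·C_1. -/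
noncomputable def clip {E : Type*} [NormedAddCommGroup E] [InnerProductSpace ℝ E]
    (v : E) (C : ℝ) : E := (min 1 (C / ‖v‖)) • v

lemma clip_norm_le {E : Type*} [NormedAddCommGroup E] [InnerProductSpace ℝ E]
    (v : E) (C : ℝ) (hC : 0 < C) : ‖clip v C‖ ≤ C := by
  rcases eq_or_ne v 0 with rfl | hv
  · simp [clip]; exact hC.le
  · have hv' : (0:ℝ) < ‖v‖ := norm_pos_iff.mpr hv
    have hmin : 0 ≤ min 1 (C / ‖v‖) := le_min zero_le_one (by positivity)
    have : ‖clip v C‖ = min 1 (C / ‖v‖) * ‖v‖ := by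
      rw [clip, norm_smul, Real.norm_eq_abs, abs_of_nonneg hmin]
    rw [this]
    calc min 1 (C / ‖v‖) * ‖v‖ ≤ (C / ‖v‖) * ‖v‖ :=
          mul_le_mul_of_nonneg_right (min_le_right _ _) hv'.le
      _ = C := by field_simp

theorem new_feedback_error_bounds {E : Type*} [NormedAddCommGroup E] [InnerProductSpace ℝ E]
    (C₁ s : ℝ) (hC₁ : 0 < C₁) (hs : 0 ≤ s) (B : ℕ) (hB : 1 ≤ B)
    (grad : E) (g : Fin B → E)
    (hdev : ‖(B : ℝ)⁻¹ • ∑ i, g i - grad‖ ≤ s) :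
    let e' : E := (B : ℝ)⁻¹ • ∑ i, (g i - clip (g i) C₁)
    ‖e'‖ ≤ ‖grad‖ + s + C₁ ∧
    (∀ C₂ : ℝ, 0 < C₂ → C₂ < ‖e'‖ → C₂ - s - C₁ < ‖grad‖) ∧
    (∀ C₂ : ℝ, 3 * C₁ + s ≤ C₂ → C₂ < ‖e'‖ → 2 * C₁ < ‖grad‖) := by
  intro e'
  have hBpos : (0:ℝ) < (B:ℝ) := by exact_mod_cast hB
  have hclip : ‖(B : ℝ)⁻¹ • ∑ i, clip (g i) C₁‖ ≤ C₁ := by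
    rw [norm_smul, Real.norm_eq_abs, abs_of_nonneg (by positivity)]
    have : ‖∑ i, clip (g i) C₁‖ ≤ (B : ℝ) * C₁ := by
      calc ‖∑ i, clip (g i) C₁‖ ≤ ∑ i : Fin B, ‖clip (g i) C₁‖ := norm_sum_le _ _
        _ ≤ ∑ _i : Fin B, C₁ := Finset.sum_le_sum fun i _ => clip_norm_le _ _ hC₁
        _ = (B : ℝ) * C₁ := by simp [mul_comm]
    calc (B:ℝ)⁻¹ * ‖∑ i, clip (g i) C₁‖ ≤ (B:ℝ)⁻¹ * ((B:ℝ) * C₁) := by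
          exact mul_le_mul_of_nonneg_left this (by positivity)
      _ = C₁ := by field_simp
  have hsplit : e' = ((B : ℝ)⁻¹ • ∑ i, g i - grad) + grad - (B : ℝ)⁻¹ • ∑ i, clip (g i) C₁ := by
    show (B : ℝ)⁻¹ • ∑ i, (g i - clip (g i) C₁) = _
    rw [Finset.sum_sub_distrib, smul_sub]
    abel
  have hmain : ‖e'‖ ≤ ‖grad‖ + s + C₁ := by
    rw [hsplit]
    calc ‖((B : ℝ)⁻¹ • ∑ i, g i - grad) + grad - (B : ℝ)⁻¹ • ∑ i, clip (g i) C₁‖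
        ≤ ‖((B : ℝ)⁻¹ • ∑ i, g i - grad) + grad‖ + ‖(B : ℝ)⁻¹ • ∑ i, clip (g i) C₁‖ :=
          norm_sub_le _ _
      _ ≤ (‖(B : ℝ)⁻¹ • ∑ i, g i - grad‖ + ‖grad‖) + C₁ :=
          add_le_add (norm_add_le _ _) hclip
      _ ≤ ‖grad‖ + s + C₁ := by linarith
  refine ⟨hmain, fun C₂ _ h => by linarith, fun C₂ hC₂ h => by linarith⟩
end

section
/- For m ∈ ℝ and σ > 0, let p_{m,σ}(x) := (1/√(2πσ²))·exp(−(x − m)²/(2σ²)), and for α > 1 define D_α(a, b) := (1/(α−1))·log ∫_ℝ p_{a,σ}(x)^α p_{b,σ}(x)^{1−α} dx. Then for all a, b, c ∈ ℝ and all β > 0, D_α(a, b) ≤ (1 + β)·D_α(a, c) + (1 + 1/β)·D_α(c, b). -/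
open Real MeasureTheory

noncomputable def gaussPdf (m σ x : ℝ) : ℝ :=
  (Real.sqrt (2 * π * σ ^ 2))⁻¹ * Real.exp (-(x - m) ^ 2 / (2 * σ ^ 2))

noncomputable def renyiDiv (σ α a b : ℝ) : ℝ :=
  (α - 1)⁻¹ * Real.log (∫ x : ℝ, gaussPdf a σ x ^ α * gaussPdf b σ x ^ (1 - α))

lemma gauss_integral (σ : ℝ) (hσ : 0 < σ) (μ : ℝ) :
    (∫ x : ℝ, Real.exp (-(x - μ) ^ 2 / (2 * σ ^ 2))) = Real.sqrt (2 * π * σ ^ 2) := by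
  have h : ∀ x : ℝ, Real.exp (-(x - μ) ^ 2 / (2 * σ ^ 2))
      = Real.exp (-(1 / (2 * σ ^ 2)) * (x - μ) ^ 2) := by
    intro x; congr 1; field_simp
  simp_rw [h]
  rw [MeasureTheory.integral_sub_right_eq_self (μ := volume)
    (fun x => Real.exp (-(1 / (2 * σ ^ 2)) * x ^ 2)) μ]
  rw [integral_gaussian]
  congr 1
  field_simp

lemma renyiDiv_eq (σ : ℝ) (hσ : 0 < σ) (α : ℝ) (hα : 1 < α) (a b : ℝ) :
    renyiDiv σ α a b = α * (a - b) ^ 2 / (2 * σ ^ 2) := by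
  have hC : 0 < Real.sqrt (2 * π * σ ^ 2) := by
    apply Real.sqrt_pos.2; positivity
  set C := Real.sqrt (2 * π * σ ^ 2) with hCdef
  set μ := α * a + (1 - α) * b with hμ
  set K := α * (α - 1) * (a - b) ^ 2 / (2 * σ ^ 2) with hK
  have key : ∀ x : ℝ, gaussPdf a σ x ^ α * gaussPdf b σ x ^ (1 - α)
      = Real.exp K * (C⁻¹ * Real.exp (-(x - μ) ^ 2 / (2 * σ ^ 2))) := by
    intro x
    unfold gaussPdf
    rw [Real.mul_rpow (by positivity) (Real.exp_nonneg _),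
        Real.mul_rpow (by positivity) (Real.exp_nonneg _),
        ← Real.exp_mul, ← Real.exp_mul]
    have hCpow : (C⁻¹) ^ α * (C⁻¹) ^ (1 - α) = C⁻¹ := by
      rw [← Real.rpow_add (by positivity)]
      norm_num
    have hexp : Real.exp (-(x - a) ^ 2 / (2 * σ ^ 2) * α) *
        Real.exp (-(x - b) ^ 2 / (2 * σ ^ 2) * (1 - α))
        = Real.exp K * Real.exp (-(x - μ) ^ 2 / (2 * σ ^ 2)) := by
      rw [← Real.exp_add, ← Real.exp_add]
      congr 1
      rw [hK, hμ]
      field_simp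
      ring
    calc (C⁻¹) ^ α * Real.exp (-(x - a) ^ 2 / (2 * σ ^ 2) * α) *
          ((C⁻¹) ^ (1 - α) * Real.exp (-(x - b) ^ 2 / (2 * σ ^ 2) * (1 - α)))
        = ((C⁻¹) ^ α * (C⁻¹) ^ (1 - α)) *
          (Real.exp (-(x - a) ^ 2 / (2 * σ ^ 2) * α) *
           Real.exp (-(x - b) ^ 2 / (2 * σ ^ 2) * (1 - α))) := by ring
      _ = C⁻¹ * (Real.exp K * Real.exp (-(x - μ) ^ 2 / (2 * σ ^ 2))) := by
          rw [hCpow, hexp]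
      _ = Real.exp K * (C⁻¹ * Real.exp (-(x - μ) ^ 2 / (2 * σ ^ 2))) := by ring
  unfold renyiDiv
  simp_rw [key]
  rw [integral_const_mul, integral_const_mul, gauss_integral σ hσ μ, ← hCdef,
      inv_mul_cancel₀ hC.ne', mul_one, Real.log_exp, hK]
  have hα1 : α - 1 ≠ 0 := by linarith
  field_simp

theorem renyi_gaussian_weak_triangle (σ : ℝ) (hσ : 0 < σ) (α : ℝ) (hα : 1 < α)
    (a b c : ℝ) (β : ℝ) (hβ : 0 < β) :
    renyiDiv σ α a b ≤ (1 + β) * renyiDiv σ α a c + (1 + 1 / β) * renyiDiv σ α c b := by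
  rw [renyiDiv_eq σ hσ α hα, renyiDiv_eq σ hσ α hα, renyiDiv_eq σ hσ α hα]
  have hα0 : 0 < α := by linarith
  have hsq : (a - b) ^ 2 ≤ (1 + β) * (a - c) ^ 2 + (1 + 1 / β) * (c - b) ^ 2 := by
    have hkey : β * (a - b) ^ 2 ≤ β * ((1 + β) * (a - c) ^ 2) + (β + 1) * (c - b) ^ 2 := by
      nlinarith [sq_nonneg (β * (a - c) - (c - b))]
    have h2 : (1 + 1 / β) * (c - b) ^ 2 = ((β + 1) * (c - b) ^ 2) / β := by
      field_simp
    rw [h2, ← sub_nonneg]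
    have : (1 + β) * (a - c) ^ 2 + (β + 1) * (c - b) ^ 2 / β - (a - b) ^ 2
        = (β * ((1 + β) * (a - c) ^ 2) + (β + 1) * (c - b) ^ 2 - β * (a - b) ^ 2) / β := by
      field_simp
    rw [this]
    apply div_nonneg _ hβ.le
    linarith
  have hσ2 : 0 < 2 * σ ^ 2 := by positivity
  rw [div_le_iff₀ hσ2] at *
  have e1 : (1 + β) * (α * (a - c) ^ 2 / (2 * σ ^ 2)) + (1 + 1 / β) * (α * (c - b) ^ 2 / (2 * σ ^ 2))
      = α * ((1 + β) * (a - c) ^ 2 + (1 + 1 / β) * (c - b) ^ 2) / (2 * σ ^ 2) := by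
    field_simp
  rw [e1, div_mul_cancel₀ _ hσ2.ne']
  nlinarith
end

section
/- Let C_2 > 0 and G' ≥ 0, and let (m_t)_{t≥0} be a sequence of nonnegative real numbers with m_0 = 0 and m_{t+1} ≤ max{0, m_t − C_2} + G' for all t ≥ 0. Then for every t ≥ 1: (i) m_t ≤ G' + (t − 1)·max{0, G' − C_2}; (ii) m_t ≤ C_2 + t·max{0, G' − C_2}; and consequently (iii) min{1, C_2/m_t} ≥ C_2/(C_2 + t·max{0, G' − C_2}) whenever m_t > 0. -/
theorem feedback_error_norm_recursion_bounds (C₂ G' : ℝ) (hC₂ : 0 < C₂) (hG' : 0 ≤ G')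
    (m : ℕ → ℝ) (hm : ∀ t, 0 ≤ m t) (hm0 : m 0 = 0)
    (hrec : ∀ t, m (t + 1) ≤ max 0 (m t - C₂) + G') :
    ∀ t : ℕ, 1 ≤ t →
      m t ≤ G' + (t - 1 : ℝ) * max 0 (G' - C₂) ∧
      m t ≤ C₂ + (t : ℝ) * max 0 (G' - C₂) ∧
      (0 < m t → C₂ / (C₂ + (t : ℝ) * max 0 (G' - C₂)) ≤ min 1 (C₂ / m t)) := by
  set D := max 0 (G' - C₂) with hD
  have hD0 : 0 ≤ D := le_max_left _ _
  have hDge : G' - C₂ ≤ D := le_max_right _ _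
  -- part (i) by induction
  have key : ∀ t : ℕ, 1 ≤ t → m t ≤ G' + (t - 1 : ℝ) * D := by
    intro t ht
    induction t with
    | zero => omega
    | succ n ih =>
      rcases Nat.eq_or_lt_of_le ht with h1 | h1
      · -- n + 1 = 1, so n = 0
        have hn : n = 0 := by omega
        subst hn
        have := hrec 0
        rw [hm0] at this
        rw [max_eq_left (by linarith : (0:ℝ) - C₂ ≤ 0)] at this
        push_cast
        linarith
      · have hn1 : 1 ≤ n := by omega
        have ihn := ih hn1
        have hrec' := hrec n
        have hmax : max 0 (m n - C₂) ≤ (n : ℝ) * D := by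
          apply max_le
          · positivity
          · have : m n - C₂ ≤ G' + (n - 1 : ℝ) * D - C₂ := by linarith
            calc m n - C₂ ≤ G' + (n - 1 : ℝ) * D - C₂ := this
              _ = (G' - C₂) + (n - 1 : ℝ) * D := by ring
              _ ≤ D + (n - 1 : ℝ) * D := by linarith
              _ = (n : ℝ) * D := by ring
        push_cast
        calc m (n + 1) ≤ max 0 (m n - C₂) + G' := hrec'
          _ ≤ (n : ℝ) * D + G' := by linarith
          _ = G' + ((n : ℝ) + 1 - 1) * D := by ring
  intro t ht
  have h1 := key t ht
  have h2 : m t ≤ C₂ + (t : ℝ) * D := by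
    have ht1 : (1 : ℝ) ≤ (t : ℝ) := by exact_mod_cast ht
    nlinarith [hDge, hD0]
  refine ⟨h1, h2, ?_⟩
  intro hmt
  have htD : 0 < C₂ + (t : ℝ) * D := by positivity
  apply le_min
  · rw [div_le_one htD]; nlinarith
  · exact div_le_div_of_nonneg_left hC₂.le hmt h2
end
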